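/- arXiv:1810.02119 — 6 statements merged into one kernel-verified Lean document; each statement's English description precedes it below -/
import Mathlib

section
/- Let X be a geodesic metric space and let Z be a closed, unbounded subset of X. If Z is Morse, then Z is contracting: for every r ≥ 0 the quantity σ(r) := sup{ diam(π_Z(x) ∪ π_Z(y)) : d(x,y) ≤ d(x,Z) ≤ r } is finite and σ(r)/r → 0 as r → ∞. -/
open Metric Set

section Defs

variable {X : Type*} [MetricSpace X]

/-- A unit-speed geodesic segment from `p` to `q`, parameterized on `[0, dist p q]`. -/
def IsGeodesicFrom (γ : ℝ → X) (p q : X) : Prop :=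
  γ 0 = p ∧ γ (dist p q) = q ∧
    ∀ s ∈ Set.Icc (0 : ℝ) (dist p q), ∀ t ∈ Set.Icc (0 : ℝ) (dist p q),
      dist (γ s) (γ t) = |s - t|

/-- A geodesic metric space: every pair of points is joined by a geodesic segment. -/
def IsGeodesicSpace (X : Type*) [MetricSpace X] : Prop :=
  ∀ p q : X, ∃ γ : ℝ → X, IsGeodesicFrom γ p q

/-- CAT(0): a geodesic space in which every geodesic triangle satisfies the comparison
inequality; equivalently (and as formalized here), for every geodesic `γ` from `p` to `q`
and every point `x`, the distance from `x` to a point of `γ` is bounded by the distance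
between the corresponding points of a comparison triangle in the Euclidean plane:
`d(x, γ t)² ≤ (1 - t/d)·d(x,p)² + (t/d)·d(x,q)² - (t/d)(1 - t/d)·d²` where `d = d(p,q)`
(written below multiplied through by `d` to avoid division). -/
def IsCAT0Space (X : Type*) [MetricSpace X] : Prop :=
  IsGeodesicSpace X ∧
    ∀ p q : X, ∀ γ : ℝ → X, IsGeodesicFrom γ p q → ∀ x : X,
      ∀ t ∈ Set.Icc (0 : ℝ) (dist p q),
        dist x (γ t) ^ 2 * dist p q ≤
          (dist p q - t) * dist x p ^ 2 + t * dist x q ^ 2 - t * (dist p q - t) * dist p q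

/-- The nearest-point projection `π_Z(x) = {z ∈ Z | d(x,z) = d(x,Z)}`. -/
def projSet (Z : Set X) (x : X) : Set X := {z ∈ Z | dist x z = Metric.infDist x Z}

/-- An `(L,A)`-quasi-geodesic segment defined on `[a,b]`. -/
def IsQuasiGeodesicOn (L A a b : ℝ) (γ : ℝ → X) : Prop :=
  a ≤ b ∧ ∀ s ∈ Set.Icc a b, ∀ t ∈ Set.Icc a b,
    |s - t| / L - A ≤ dist (γ s) (γ t) ∧ dist (γ s) (γ t) ≤ L * |s - t| + A

/-- `Z` is Morse: for all `L ≥ 1`, `A ≥ 0` there is a bound `M = μ(L,A)` on the distance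
to `Z` of points on `(L,A)`-quasi-geodesic segments with both endpoints on `Z`. -/
def IsMorse (Z : Set X) : Prop :=
  ∀ L : ℝ, 1 ≤ L → ∀ A : ℝ, 0 ≤ A → ∃ M : ℝ,
    ∀ a b : ℝ, ∀ γ : ℝ → X, IsQuasiGeodesicOn L A a b γ → γ a ∈ Z → γ b ∈ Z →
      ∀ s ∈ Set.Icc a b, Metric.infDist (γ s) Z ≤ M

/-- `Z` with the open balls of radius `d(z,z')/3` about `z` and `z'` removed. -/
def recRemoved (Z : Set X) (z z' : X) : Set X :=
  Z \ (Metric.ball z (dist z z' / 3) ∪ Metric.ball z' (dist z z' / 3))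

/-- `Z` is `ρ`-recurrent: for every `q ≥ 1`, every rectifiable segment `γ` with endpoints
`z, z' ∈ Z` and `len(γ) ≤ q · d(z,z')` comes within distance `ρ(q)` of `Z'`, where `Z'` is
`Z` with the open balls of radius `d(z,z')/3` about the endpoints removed.  (Distance to
`Z'` is measured by `infEdist`, which is `∞` when `Z'` is empty, matching
`inf ∅ = ∞` in the definition of `ρ`.) -/
def IsRecurrentWith (Z : Set X) (ρ : ℝ → ℝ) : Prop :=
  ∀ q : ℝ, 1 ≤ q → ∀ a b : ℝ, a ≤ b → ∀ γ : ℝ → X,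
    ContinuousOn γ (Set.Icc a b) → γ a ∈ Z → γ b ∈ Z →
    eVariationOn γ (Set.Icc a b) ≤ ENNReal.ofReal (q * dist (γ a) (γ b)) →
    ∃ s ∈ Set.Icc a b,
      EMetric.infEdist (γ s) (recRemoved Z (γ a) (γ b)) ≤ ENNReal.ofReal (ρ q)

/-- `Z` is recurrent: `ρ(q) < ∞` for every `q ≥ 1`, i.e. some real-valued function `ρ`
witnesses recurrence. -/
def IsRecurrent (Z : Set X) : Prop := ∃ ρ : ℝ → ℝ, IsRecurrentWith Z ρ

/-- `Z` is contracting with gauge `σ`: `σ(r)` bounds `diam(π_Z(x) ∪ π_Z(y))` whenever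
`d(x,y) ≤ d(x,Z) ≤ r`, and `σ(r)/r → 0` as `r → ∞`. -/
def IsContractingWith (Z : Set X) (σ : ℝ → ℝ) : Prop :=
  (∀ r : ℝ, 0 ≤ r → ∀ x y : X, dist x y ≤ Metric.infDist x Z → Metric.infDist x Z ≤ r →
      ∀ p ∈ projSet Z x ∪ projSet Z y, ∀ p' ∈ projSet Z x ∪ projSet Z y,
        dist p p' ≤ σ r) ∧
    Filter.Tendsto (fun r => σ r / r) Filter.atTop (nhds 0)

/-- `Z` is contracting: there is a sublinear contraction gauge. -/
def IsContracting (Z : Set X) : Prop := ∃ σ : ℝ → ℝ, IsContractingWith Z σ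

/-- `Z` is strongly contracting: a single constant `C ≥ 0` bounds
`diam(π_Z(x) ∪ π_Z(y))` whenever `d(x,y) ≤ d(x,Z)`. -/
def IsStronglyContracting (Z : Set X) : Prop :=
  ∃ C : ℝ, 0 ≤ C ∧ ∀ x y : X, dist x y ≤ Metric.infDist x Z →
    ∀ p ∈ projSet Z x ∪ projSet Z y, ∀ p' ∈ projSet Z x ∪ projSet Z y, dist p p' ≤ C

/-- `X` is `δ`-hyperbolic: every geodesic triangle is `δ`-thin, i.e. each side lies in the
`δ`-neighborhood of the union of the other two sides. -/
def IsDeltaHyperbolic (X : Type*) [MetricSpace X] (δ : ℝ) : Prop :=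
  ∀ x y z : X, ∀ γ₁ γ₂ γ₃ : ℝ → X,
    IsGeodesicFrom γ₁ x y → IsGeodesicFrom γ₂ y z → IsGeodesicFrom γ₃ x z →
    ∀ t ∈ Set.Icc (0 : ℝ) (dist x y),
      Metric.infDist (γ₁ t)
        (γ₂ '' Set.Icc (0 : ℝ) (dist y z) ∪ γ₃ '' Set.Icc (0 : ℝ) (dist x z)) ≤ δ

/-- `Z` is quasi-convex: every geodesic segment with both endpoints in `Z` lies in the
`C`-neighborhood of `Z`, for some `C ≥ 0`. -/
def IsQuasiConvex (Z : Set X) : Prop :=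
  ∃ C : ℝ, 0 ≤ C ∧ ∀ p ∈ Z, ∀ q ∈ Z, ∀ γ : ℝ → X, IsGeodesicFrom γ p q →
    ∀ t ∈ Set.Icc (0 : ℝ) (dist p q), Metric.infDist (γ t) Z ≤ C

end Defs

/-!
Let `z ∈ π_Z(u)` and `z' ∈ π_Z(v)` with `d(u,v) ≤ d(u,Z) = R`. The broken geodesic
`z → u → v → z'` has length `ℓ ≤ 4R`. Replacing, as long as possible, subpaths that are much
longer than the distance between their endpoints by geodesics turns it into an
`(L,A)`-quasi-geodesic all of whose points lie within `ℓ/(L-1)` of the broken geodesic. By the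
Morse property, the point of this quasi-geodesic at distance `d(z,z')/2` from `z` is close to some
`ζ ∈ Z`, which is then far from both `z` and `z'`. On the other hand, since `z` and `z'` are
nearest points, any point `x` of the broken geodesic satisfies
`min (d(z,ζ), d(z',ζ)) ≤ 4 d(x,ζ)`. Hence `d(z,z') ≤ 10(μ(L,A)+1) + 32R/(L-1)`, and the infimum of
these bounds over `L` is a sublinear gauge.
-/

open Filter
open scoped NNReal Topology

section Paths

variable {α : Type*}

noncomputable def glueAt (c : ℝ) (f g : ℝ → α) : ℝ → α := fun t => if t ≤ c then f t else g t

lemma glueAt_of_le {c t : ℝ} {f g : ℝ → α} (ht : t ≤ c) : glueAt c f g t = f t := if_pos ht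

lemma glueAt_of_ge {c t : ℝ} {f g : ℝ → α} (hfg : f c = g c) (ht : c ≤ t) :
    glueAt c f g t = g t := by
  rcases ht.eq_or_lt with rfl | ht
  · exact (glueAt_of_le le_rfl).trans hfg
  · exact if_neg ht.not_ge

variable [PseudoMetricSpace α]

lemma lipschitzOnWith_glueAt {K : ℝ≥0} {a b c : ℝ} {f g : ℝ → α}
    (hf : LipschitzOnWith K f (Icc a c)) (hg : LipschitzOnWith K g (Icc c b)) (hfg : f c = g c) :
    LipschitzOnWith K (glueAt c f g) (Icc a b) := by
  have key : ∀ s ∈ Icc a b, ∀ t ∈ Icc a b, s ≤ t →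
      dist (glueAt c f g s) (glueAt c f g t) ≤ K * dist s t := by
    intro s hs t ht hst
    rcases le_total t c with htc | hct
    · rw [glueAt_of_le (hst.trans htc), glueAt_of_le htc]
      exact hf.dist_le_mul s ⟨hs.1, hst.trans htc⟩ t ⟨ht.1, htc⟩
    rcases le_total s c with hsc | hcs
    · rw [glueAt_of_le hsc, glueAt_of_ge hfg hct, Real.dist_eq, abs_of_nonpos (by linarith)]
      calc dist (f s) (g t) ≤ dist (f s) (f c) + dist (g c) (g t) := hfg ▸ dist_triangle _ _ _
        _ ≤ K * dist s c + K * dist c t :=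
          add_le_add (hf.dist_le_mul s ⟨hs.1, hsc⟩ c ⟨hs.1.trans hsc, le_rfl⟩)
            (hg.dist_le_mul c ⟨le_rfl, hct.trans ht.2⟩ t ⟨hct, ht.2⟩)
        _ = K * -(s - t) := by
          rw [Real.dist_eq, Real.dist_eq, abs_of_nonpos (by linarith),
            abs_of_nonpos (by linarith)]
          ring
    · rw [glueAt_of_ge hfg hcs, glueAt_of_ge hfg hct]
      exact hg.dist_le_mul s ⟨hcs, hs.2⟩ t ⟨hct, ht.2⟩
  refine LipschitzOnWith.of_dist_le_mul fun s hs t ht => ?_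
  rcases le_total s t with hst | hts
  · exact key s hs t ht hst
  · rw [dist_comm, dist_comm s]
    exact key t ht s hs hts

lemma LipschitzOnWith.comp_add_const {K : ℝ≥0} {a b c : ℝ} {γ : ℝ → α}
    (hγ : LipschitzOnWith K γ (Icc (a + c) (b + c))) :
    LipschitzOnWith K (fun t => γ (t + c)) (Icc a b) := by
  refine LipschitzOnWith.of_dist_le_mul fun s hs t ht => ?_
  simpa only [dist_add_right] using
    hγ.dist_le_mul (s + c) ⟨by linarith [hs.1], by linarith [hs.2]⟩
      (t + c) ⟨by linarith [ht.1], by linarith [ht.2]⟩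

end Paths

section Geodesic

variable {X : Type*} [MetricSpace X]

lemma IsGeodesicFrom.lipschitzOnWith {γ : ℝ → X} {p q : X} (hγ : IsGeodesicFrom γ p q) :
    LipschitzOnWith 1 γ (Icc 0 (dist p q)) :=
  LipschitzOnWith.mk_one fun s hs t ht => (hγ.2.2 s hs t ht).trans_le (Real.dist_eq s t).ge

lemma IsGeodesicFrom.dist_left {γ : ℝ → X} {p q : X} (hγ : IsGeodesicFrom γ p q) {t : ℝ}
    (ht : t ∈ Icc 0 (dist p q)) : dist p (γ t) = t := by
  rw [← hγ.1, hγ.2.2 0 ⟨le_rfl, ht.1.trans ht.2⟩ t ht, zero_sub, abs_neg, abs_of_nonneg ht.1]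

lemma IsGeodesicFrom.dist_add_dist {γ : ℝ → X} {p q : X} (hγ : IsGeodesicFrom γ p q) {t : ℝ}
    (ht : t ∈ Icc 0 (dist p q)) : dist p (γ t) + dist (γ t) q = dist p q := by
  have hq : dist p q ∈ Icc 0 (dist p q) := ⟨ht.1.trans ht.2, le_rfl⟩
  have h := hγ.2.2 t ht _ hq
  rw [hγ.2.1, abs_of_nonpos (by linarith [ht.2])] at h
  rw [hγ.dist_left ht, h]
  ring

lemma exists_extend_geodesic (hX : IsGeodesicSpace X) {γ : ℝ → X} {m : ℝ} {x : X}
    (hγ : LipschitzOnWith 1 γ (Icc 0 m)) (hx : γ m = x) (y : X) :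
    ∃ γ' : ℝ → X, LipschitzOnWith 1 γ' (Icc 0 (m + dist x y)) ∧ EqOn γ' γ (Icc 0 m) ∧
      γ' (m + dist x y) = y ∧
      ∀ t ∈ Icc m (m + dist x y), dist x (γ' t) + dist (γ' t) y = dist x y := by
  obtain ⟨g, hg⟩ := hX x y
  have hjoin : γ m = g (m + -m) := by rw [add_neg_cancel, hg.1, hx]
  refine ⟨glueAt m γ (fun t => g (t + -m)), ?_, fun t ht => glueAt_of_le ht.2, ?_, ?_⟩
  · refine lipschitzOnWith_glueAt hγ (LipschitzOnWith.comp_add_const ?_) hjoin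
    exact hg.lipschitzOnWith.mono (Icc_subset_Icc (by linarith) (by linarith))
  · rw [glueAt_of_ge hjoin (by linarith [dist_nonneg (x := x) (y := y)]),
      add_neg_cancel_comm, hg.2.1]
  · intro t ht
    rw [glueAt_of_ge hjoin ht.1]
    exact hg.dist_add_dist ⟨by linarith [ht.1], by linarith [ht.2]⟩

lemma exists_broken_geodesic (hX : IsGeodesicSpace X) (a b c d : X) :
    ∃ γ : ℝ → X, LipschitzOnWith 1 γ (Icc 0 (dist a b + dist b c + dist c d)) ∧ γ 0 = a ∧
      γ (dist a b + dist b c + dist c d) = d ∧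
      ∀ t ∈ Icc 0 (dist a b + dist b c + dist c d),
        dist a (γ t) + dist (γ t) b = dist a b ∨ dist b (γ t) + dist (γ t) c = dist b c ∨
          dist c (γ t) + dist (γ t) d = dist c d := by
  obtain ⟨g, hg⟩ := hX a b
  obtain ⟨γ₂, hγ₂, hγ₂g, hγ₂c, hγ₂btw⟩ := exists_extend_geodesic hX hg.lipschitzOnWith hg.2.1 c
  obtain ⟨γ₃, hγ₃, hγ₃γ₂, hγ₃d, hγ₃btw⟩ := exists_extend_geodesic hX hγ₂ hγ₂c d
  have hab := dist_nonneg (x := a) (y := b)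
  have hbc := dist_nonneg (x := b) (y := c)
  refine ⟨γ₃, hγ₃, ?_, hγ₃d, fun t ht => ?_⟩
  · rw [hγ₃γ₂ ⟨le_rfl, by linarith⟩, hγ₂g ⟨le_rfl, hab⟩, hg.1]
  rcases le_or_gt t (dist a b + dist b c) with h₂ | h₂
  · rw [hγ₃γ₂ ⟨ht.1, h₂⟩]
    rcases le_or_gt t (dist a b) with h₁ | h₁
    · rw [hγ₂g ⟨ht.1, h₁⟩]
      exact Or.inl (hg.dist_add_dist ⟨ht.1, h₁⟩)
    · exact Or.inr (Or.inl (hγ₂btw t ⟨h₁.le, h₂⟩))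
  · exact Or.inr (Or.inr (hγ₃btw t ⟨h₂.le, ht.2⟩))

lemma exists_shortcut (hX : IsGeodesicSpace X) {L A : ℝ} (hL : 1 < L) (hA : 0 ≤ A)
    {γ : ℝ → X} {m u v : ℝ} (hγ : LipschitzOnWith 1 γ (Icc 0 m)) (hu : u ∈ Icc 0 m)
    (hv : v ∈ Icc 0 m) (hshort : dist (γ u) (γ v) < (v - u) / L - A) :
    ∃ m₁ : ℝ, ∃ γ₁ : ℝ → X, 0 ≤ m₁ ∧ m₁ + A < m ∧ LipschitzOnWith 1 γ₁ (Icc 0 m₁) ∧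
      γ₁ 0 = γ 0 ∧ γ₁ m₁ = γ m ∧
      ∀ s ∈ Icc 0 m₁, ∃ t ∈ Icc 0 m, dist (γ₁ s) (γ t) ≤ (m - m₁) / (L - 1) := by
  set b := dist (γ u) (γ v)
  set sh := v - u - b with hsh_def
  have hb : 0 ≤ b := dist_nonneg
  have hlong : (b + A) * L < v - u := (lt_div_iff₀ (by linarith)).1 (by linarith)
  have hsh : (L - 1) * b + A < sh := by nlinarith
  have hAsh : A < sh := by nlinarith
  have hbsh : b ≤ sh / (L - 1) := by rw [le_div_iff₀ (by linarith)]; nlinarith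
  obtain ⟨γ', hγ', hγ'γ, hγ'v, hγ'btw⟩ :=
    exists_extend_geodesic hX (hγ.mono (Icc_subset_Icc le_rfl hu.2)) rfl (γ v)
  have hjoin : γ' (u + b) = γ (u + b + sh) := by rw [hγ'v]; congr 1; ring
  refine ⟨m - sh, glueAt (u + b) γ' (fun t => γ (t + sh)), by linarith [hu.1, hv.2], by linarith,
    ?_, ?_, ?_, ?_⟩
  · refine lipschitzOnWith_glueAt hγ' (LipschitzOnWith.comp_add_const ?_) hjoin
    exact hγ.mono (Icc_subset_Icc (by linarith [hu.1]) (by linarith))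
  · rw [glueAt_of_le (by linarith [hu.1]), hγ'γ ⟨le_rfl, hu.1⟩]
  · rw [glueAt_of_ge hjoin (by linarith [hv.2]), sub_add_cancel]
  · have hm : m - (m - sh) = sh := by ring
    rw [hm]
    intro s hs
    rcases le_or_gt s (u + b) with hsb | hsb
    · rw [glueAt_of_le hsb]
      rcases le_or_gt s u with hsu | hsu
      · refine ⟨s, ⟨hs.1, hsu.trans hu.2⟩, ?_⟩
        rw [hγ'γ ⟨hs.1, hsu⟩, dist_self]
        exact div_nonneg (by linarith) (by linarith)
      · refine ⟨u, hu, ?_⟩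
        have h := hγ'btw s ⟨hsu.le, hsb⟩
        rw [dist_comm]
        linarith [dist_nonneg (x := γ' s) (y := γ v)]
    · refine ⟨s + sh, ⟨by linarith [hu.1], by linarith [hs.2]⟩, ?_⟩
      rw [glueAt_of_ge hjoin hsb.le, dist_self]
      exact div_nonneg (by linarith) (by linarith)

lemma exists_tamed_path (hX : IsGeodesicSpace X) {L A : ℝ} (hL : 1 < L) (hA : 0 < A)
    {γ : ℝ → X} {m : ℝ} (hm : 0 ≤ m) (hγ : LipschitzOnWith 1 γ (Icc 0 m)) :
    ∃ m' : ℝ, ∃ p : ℝ → X, 0 ≤ m' ∧ LipschitzOnWith 1 p (Icc 0 m') ∧ p 0 = γ 0 ∧ p m' = γ m ∧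
      (∀ s ∈ Icc 0 m', ∀ t ∈ Icc 0 m', |s - t| / L - A ≤ dist (p s) (p t)) ∧
      ∀ s ∈ Icc 0 m', ∃ t ∈ Icc 0 m, dist (p s) (γ t) ≤ (m - m') / (L - 1) := by
  set S : Set ℝ := {m' | 0 ≤ m' ∧ ∃ p : ℝ → X, LipschitzOnWith 1 p (Icc 0 m') ∧ p 0 = γ 0 ∧
    p m' = γ m ∧ ∀ s ∈ Icc 0 m', ∃ t ∈ Icc 0 m, dist (p s) (γ t) ≤ (m - m') / (L - 1)}
  have hmS : m ∈ S := ⟨hm, γ, hγ, rfl, rfl, fun s hs => ⟨s, hs, by simp⟩⟩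
  have hS : BddBelow S := ⟨0, fun _ h => h.1⟩
  -- a path of almost minimal length in `S` admits no shortcut, which would save at least `A`
  obtain ⟨m', ⟨hm', p, hp, hp0, hpm, hpγ⟩, hm'S⟩ :=
    exists_lt_of_csInf_lt ⟨m, hmS⟩ (lt_add_of_pos_right (sInf S) hA)
  refine ⟨m', p, hm', hp, hp0, hpm, fun s hs t ht => ?_, hpγ⟩
  by_contra! hlt
  wlog hst : s ≤ t generalizing s t
  · exact this t ht s hs (by rwa [dist_comm, abs_sub_comm]) (le_of_not_ge hst)
  rw [abs_sub_comm, abs_of_nonneg (sub_nonneg.2 hst)] at hlt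
  obtain ⟨m₁, γ₁, hm₁, hm₁A, hγ₁, hγ₁0, hγ₁m, hγ₁p⟩ := exists_shortcut hX hL hA.le hp hs ht hlt
  have hm₁S : m₁ ∈ S := by
    refine ⟨hm₁, γ₁, hγ₁, hγ₁0.trans hp0, hγ₁m.trans hpm, fun s' hs' => ?_⟩
    obtain ⟨t₁, ht₁, h₁⟩ := hγ₁p s' hs'
    obtain ⟨t₂, ht₂, h₂⟩ := hpγ t₁ ht₁
    refine ⟨t₂, ht₂, ?_⟩
    calc dist (γ₁ s') (γ t₂) ≤ dist (γ₁ s') (p t₁) + dist (p t₁) (γ t₂) := dist_triangle _ _ _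
      _ ≤ (m' - m₁) / (L - 1) + (m - m') / (L - 1) := add_le_add h₁ h₂
      _ = (m - m₁) / (L - 1) := by ring
  linarith [csInf_le hS hm₁S]

def IsMorseBound (Z : Set X) (L A M : ℝ) : Prop :=
  ∀ a b : ℝ, ∀ γ : ℝ → X, IsQuasiGeodesicOn L A a b γ → γ a ∈ Z → γ b ∈ Z →
    ∀ s ∈ Icc a b, infDist (γ s) Z ≤ M

lemma IsMorse.exists_isMorseBound {Z : Set X} (hZ : IsMorse Z) {L A : ℝ} (hL : 1 ≤ L)
    (hA : 0 ≤ A) : ∃ M, 0 ≤ M ∧ IsMorseBound Z L A M := by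
  obtain ⟨M, hM⟩ := hZ L hL A hA
  exact ⟨max M 0, le_max_right _ _, fun a b γ hγ ha hb s hs =>
    (hM a b γ hγ ha hb s hs).trans (le_max_left _ _)⟩

lemma exists_mem_near_path_far_from_ends (hX : IsGeodesicSpace X) {Z : Set X} {L A M : ℝ}
    (hL : 1 < L) (hA : 0 < A) (hM : IsMorseBound Z L A M) {γ : ℝ → X} {m : ℝ} (hm : 0 ≤ m)
    (hγ : LipschitzOnWith 1 γ (Icc 0 m)) (h0 : γ 0 ∈ Z) (h1 : γ m ∈ Z) :
    ∃ w ∈ Icc 0 m, ∃ ζ ∈ Z, dist (γ w) ζ ≤ M + 1 + m / (L - 1) ∧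
      dist (γ 0) (γ m) / 2 ≤ dist (γ 0) ζ + (M + 1) ∧
      dist (γ 0) (γ m) / 2 ≤ dist (γ m) ζ + (M + 1) := by
  obtain ⟨m', p, hm', hp, hp0, hpm, hptaut, hpγ⟩ := exists_tamed_path hX hL hA hm hγ
  have hqg : IsQuasiGeodesicOn L A 0 m' p := by
    refine ⟨hm', fun s hs t ht => ⟨hptaut s hs t ht, ?_⟩⟩
    have h := hp.dist_le_mul s hs t ht
    rw [NNReal.coe_one, one_mul, Real.dist_eq] at h
    nlinarith [abs_nonneg (s - t)]
  have hcont : ContinuousOn (fun s => dist (p s) (γ 0)) (Icc 0 m') :=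
    (continuous_id.dist continuous_const).comp_continuousOn hp.continuousOn
  obtain ⟨s, hs, hsmid⟩ : ∃ s ∈ Icc 0 m', dist (p s) (γ 0) = dist (γ 0) (γ m) / 2 := by
    refine intermediate_value_Icc hm' hcont ⟨?_, ?_⟩
    · simp only [hp0, dist_self]; positivity
    · simp only [hpm, dist_comm (γ m)]; linarith [dist_nonneg (x := γ 0) (y := γ m)]
  obtain ⟨ζ, hζ, hsζ⟩ := (infDist_lt_iff ⟨_, h0⟩).1
    ((hM 0 m' p hqg (hp0 ▸ h0) (hpm ▸ h1) s hs).trans_lt (lt_add_one M))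
  obtain ⟨w, hw, hwd⟩ := hpγ s hs
  have hshadow : (m - m') / (L - 1) ≤ m / (L - 1) :=
    div_le_div_of_nonneg_right (by linarith) (by linarith)
  refine ⟨w, hw, ζ, hζ, ?_, ?_, ?_⟩
  · linarith [dist_triangle (γ w) (p s) ζ, dist_comm (γ w) (p s)]
  · linarith [dist_triangle (p s) ζ (γ 0), dist_comm ζ (γ 0)]
  · linarith [dist_triangle (γ 0) (p s) (γ m), dist_triangle (p s) ζ (γ m), dist_comm ζ (γ m),
      dist_comm (γ 0) (p s)]

lemma dist_le_two_mul_of_mem_projSet {Z : Set X} {y z x ζ : X} (hz : z ∈ projSet Z y)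
    (hx : dist z x + dist x y = dist z y) (hζ : ζ ∈ Z) : dist z ζ ≤ 2 * dist x ζ := by
  have hy : dist y z ≤ dist y x + dist x ζ :=
    hz.2 ▸ (infDist_le_dist_of_mem hζ).trans (dist_triangle _ _ _)
  linarith [dist_triangle z x ζ, dist_comm y z, dist_comm y x]

lemma dist_le_four_mul_of_mem_projSet {Z : Set X} {u v zv x ζ : X} (hzv : zv ∈ projSet Z v)
    (huv : dist u v ≤ infDist u Z) (hx : dist u x + dist x v = dist u v) (hζ : ζ ∈ Z) :
    dist zv ζ ≤ 4 * dist x ζ := by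
  have hu : infDist u Z ≤ dist u x + dist x ζ :=
    (infDist_le_dist_of_mem hζ).trans (dist_triangle _ _ _)
  have hv : dist v zv ≤ dist v x + dist x ζ :=
    hzv.2 ▸ (infDist_le_dist_of_mem hζ).trans (dist_triangle _ _ _)
  linarith [dist_triangle zv v ζ, dist_triangle v x ζ, dist_comm zv v, dist_comm x v]

lemma dist_le_of_mem_projSet (hX : IsGeodesicSpace X) {Z : Set X} {L A M : ℝ} (hL : 1 < L)
    (hA : 0 < A) (hM : IsMorseBound Z L A M) {u v zu zv : X} (hzu : zu ∈ projSet Z u)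
    (hzv : zv ∈ projSet Z v) (huv : dist u v ≤ infDist u Z) :
    dist zu zv ≤ 10 * (M + 1) + 32 * infDist u Z / (L - 1) := by
  obtain ⟨γ, hγ, hγ0, hγ1, hγbtw⟩ := exists_broken_geodesic hX zu u v zv
  set ℓ := dist zu u + dist u v + dist v zv
  have hℓ : ℓ ≤ 4 * infDist u Z := by
    have hvZ : infDist v Z ≤ infDist u Z + dist v u := infDist_le_infDist_add_dist
    linarith [hzu.2, hzv.2, dist_comm zu u, dist_comm v u]
  obtain ⟨w, hw, ζ, hζ, hwζ, h0ζ, h1ζ⟩ := exists_mem_near_path_far_from_ends hX hL hA hM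
    (by positivity) hγ (hγ0 ▸ hzu.1) (hγ1 ▸ hzv.1)
  rw [hγ0, hγ1] at h0ζ h1ζ
  have hnear : dist zu ζ ≤ 4 * dist (γ w) ζ ∨ dist zv ζ ≤ 4 * dist (γ w) ζ := by
    rcases hγbtw w hw with h | h | h
    · exact Or.inl <| (dist_le_two_mul_of_mem_projSet hzu h hζ).trans
        (by linarith [dist_nonneg (x := γ w) (y := ζ)])
    · exact Or.inr <| dist_le_four_mul_of_mem_projSet hzv huv h hζ
    · refine Or.inr <| (dist_le_two_mul_of_mem_projSet (x := γ w) hzv ?_ hζ).trans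
        (by linarith [dist_nonneg (x := γ w) (y := ζ)])
      linarith [dist_comm zv (γ w), dist_comm (γ w) v, dist_comm zv v]
  have hℓL : ℓ / (L - 1) ≤ 4 * infDist u Z / (L - 1) :=
    div_le_div_of_nonneg_right hℓ (by linarith)
  have h32 : 32 * infDist u Z / (L - 1) = 8 * (4 * infDist u Z / (L - 1)) := by ring
  rcases hnear with h | h <;> linarith

lemma dist_le_of_mem_projSet_union (hX : IsGeodesicSpace X) {Z : Set X} {L A M : ℝ}
    (hL : 1 < L) (hA : 0 < A) (hM : IsMorseBound Z L A M) {r : ℝ} {x y p p' : X}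
    (hxy : dist x y ≤ infDist x Z) (hxr : infDist x Z ≤ r)
    (hp : p ∈ projSet Z x ∪ projSet Z y) (hp' : p' ∈ projSet Z x ∪ projSet Z y) :
    dist p p' ≤ 10 * (M + 1) + 64 * r / (L - 1) := by
  have hyr : infDist y Z ≤ 2 * r := by
    linarith [infDist_le_infDist_add_dist (x := y) (y := x) (s := Z), dist_comm x y]
  have hbound : ∀ {u v zu zv : X}, zu ∈ projSet Z u → zv ∈ projSet Z v →
      dist u v ≤ infDist u Z → infDist u Z ≤ 2 * r →
      dist zu zv ≤ 10 * (M + 1) + 64 * r / (L - 1) := by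
    intro u v zu zv hzu hzv huv hur
    have : 32 * infDist u Z / (L - 1) ≤ 64 * r / (L - 1) :=
      div_le_div_of_nonneg_right (by linarith) (by linarith)
    linarith [dist_le_of_mem_projSet hX hL hA hM hzu hzv huv]
  have hxx : dist x x ≤ infDist x Z := by simp [infDist_nonneg]
  have hyy : dist y y ≤ infDist y Z := by simp [infDist_nonneg]
  rcases hp with hp | hp <;> rcases hp' with hp' | hp'
  · exact hbound hp hp' hxx (by linarith [infDist_nonneg (x := x) (s := Z)])
  · exact hbound hp hp' hxy (by linarith [infDist_nonneg (x := x) (s := Z)])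
  · exact dist_comm p p' ▸ hbound hp' hp hxy (by linarith [infDist_nonneg (x := x) (s := Z)])
  · exact hbound hp hp' hyy hyr

end Geodesic

lemma tendsto_div_atTop_zero_of_le_add_mul {σ : ℝ → ℝ} (h0 : ∀ r, 0 ≤ r → 0 ≤ σ r)
    (h : ∀ ε > 0, ∃ C, ∀ r, 0 ≤ r → σ r ≤ C + ε * r) :
    Tendsto (fun r => σ r / r) atTop (𝓝 0) := by
  refine tendsto_order.2 ⟨fun a ha => ?_, fun b hb => ?_⟩
  · filter_upwards [eventually_gt_atTop 0] with r hr
    exact ha.trans_le (div_nonneg (h0 r hr.le) hr.le)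
  · obtain ⟨C, hC⟩ := h (b / 2) (half_pos hb)
    filter_upwards [eventually_gt_atTop (max 0 (2 * C / b))] with r hr
    have hr0 : 0 < r := (le_max_left _ _).trans_lt hr
    have hCr : 2 * C < r * b := (div_lt_iff₀ hb).1 ((le_max_right _ _).trans_lt hr)
    rw [div_lt_iff₀ hr0]
    linarith [hC r hr0.le]

theorem morse_implies_contracting_general
    {X : Type*} [MetricSpace X] (hX : IsGeodesicSpace X)
    (Z : Set X) (hmorse : IsMorse Z) :
    IsContracting Z := by
  have hL : ∀ k : ℕ, (1 : ℝ) < k + 2 := fun k => by linarith [k.cast_nonneg (α := ℝ)]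
  choose M hM0 hM using fun k : ℕ => hmorse.exists_isMorseBound (hL k).le zero_le_one
  have hterm : ∀ r, 0 ≤ r → ∀ k : ℕ, 0 ≤ 10 * (M k + 1) + 64 * r / (k + 1) :=
    fun r hr k => by linarith [hM0 k, div_nonneg (by linarith : 0 ≤ 64 * r) k.cast_add_one_pos.le]
  set σ : ℝ → ℝ := fun r => ⨅ k : ℕ, (10 * (M k + 1) + 64 * r / (k + 1))
  have hσ : ∀ r, 0 ≤ r → ∀ k : ℕ, σ r ≤ 10 * (M k + 1) + 64 * r / (k + 1) :=
    fun r hr k => ciInf_le ⟨0, Set.forall_mem_range.2 (hterm r hr)⟩ k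
  refine ⟨σ, fun r _ x y hxy hxr p hp p' hp' => le_ciInf fun k => ?_, ?_⟩
  · have h := dist_le_of_mem_projSet_union hX (hL k) one_pos (hM k) hxy hxr hp hp'
    rwa [show (k : ℝ) + 2 - 1 = k + 1 by ring] at h
  refine tendsto_div_atTop_zero_of_le_add_mul (fun r hr => le_ciInf (hterm r hr)) fun ε hε => ?_
  obtain ⟨k, hk⟩ := exists_nat_one_div_lt (div_pos hε (by norm_num : (0 : ℝ) < 64))
  refine ⟨10 * (M k + 1), fun r hr => (hσ r hr k).trans ?_⟩
  have hk' : 64 / ((k : ℝ) + 1) ≤ ε := by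
    rw [show 64 / ((k : ℝ) + 1) = 64 * (1 / (k + 1)) by ring]
    linarith
  linarith [mul_div_right_comm 64 r ((k : ℝ) + 1), mul_le_mul_of_nonneg_right hk' hr]

/-- In a geodesic metric space, a closed unbounded Morse subset is contracting. -/
theorem morse_implies_contracting
    {X : Type*} [MetricSpace X] (hX : IsGeodesicSpace X)
    (Z : Set X) (hZclosed : IsClosed Z) (hZunbdd : ¬ Bornology.IsBounded Z)
    (hmorse : IsMorse Z) :
    IsContracting Z :=
  morse_implies_contracting_general hX Z hmorse
end

section
/- Let X be a geodesic metric space and let Z be a closed, unbounded subset of X. If Z is recurrent, then Z is Morse: for every L ≥ 1 and A ≥ 0, the quantity μ(L,A) := sup_γ sup_{w ∈ γ} d(w,Z), where the first supremum is over (L,A)-quasi-geodesic segments γ with both endpoints on Z, is finite. -/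
open Metric Set

/-!
Sample the quasi-geodesic at unit times. The samples form a discrete quasi-geodesic: steps are
at most `c = L + A`, and index gaps are bounded linearly by distances. Fix `r` a little larger
than `ρ(q) + c`, with `q = cL + 1`, and look at an excursion of the samples outside the
`r`-neighbourhood of `Z`, with its two ends `r`-close to points `z₁, z₂ ∈ Z`. If the excursion
were long, `d(z₁, z₂)` would be large, so the piecewise geodesic `z₁ → samples → z₂` would have
length at most `q · d(z₁, z₂)`. Recurrence then yields a point of `Z` far from `z₁, z₂` that is
`ρ(q)`-close to this path; near the ends this contradicts `d(z₁, z₂)` being large, and in the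
middle it contradicts being outside the `r`-neighbourhood. So excursions have bounded length,
and every point of the quasi-geodesic is uniformly close to `Z`.
-/

section Geodesic

lemma LipschitzOnWith.Icc_glue {Y : Type*} [PseudoMetricSpace Y] {f : ℝ → Y} {K : NNReal}
    {a b c : ℝ} (h₁ : LipschitzOnWith K f (Icc a b)) (h₂ : LipschitzOnWith K f (Icc b c)) :
    LipschitzOnWith K f (Icc a c) := by
  have key : ∀ s ∈ Icc a c, ∀ t ∈ Icc a c, s ≤ t → dist (f s) (f t) ≤ K * dist s t := by
    intro s hs t ht hst
    rcases le_total t b with htb | hbt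
    · exact h₁.dist_le_mul s ⟨hs.1, hst.trans htb⟩ t ⟨ht.1, htb⟩
    rcases le_total b s with hbs | hsb
    · exact h₂.dist_le_mul s ⟨hbs, hs.2⟩ t ⟨hbt, ht.2⟩
    calc dist (f s) (f t) ≤ dist (f s) (f b) + dist (f b) (f t) := dist_triangle _ _ _
      _ ≤ K * dist s b + K * dist b t := add_le_add
          (h₁.dist_le_mul s ⟨hs.1, hsb⟩ b ⟨hs.1.trans hsb, le_rfl⟩)
          (h₂.dist_le_mul b ⟨le_rfl, hbt.trans ht.2⟩ t ⟨hbt, ht.2⟩)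
      _ = K * dist s t := by
          simp only [Real.dist_eq, abs_of_nonpos (sub_nonpos.2 hsb),
            abs_of_nonpos (sub_nonpos.2 hbt), abs_of_nonpos (sub_nonpos.2 hst)]
          ring
  refine LipschitzOnWith.of_dist_le_mul fun s hs t ht => ?_
  rcases le_total s t with hst | hts
  · exact key s hs t ht hst
  · rw [dist_comm, dist_comm s]
    exact key t ht s hs hts

variable {X : Type*} [MetricSpace X]

namespace IsGeodesicFrom

variable {γ : ℝ → X} {p q : X}

lemma dist_eq (hγ : IsGeodesicFrom γ p q) {s t : ℝ} (hs : s ∈ Icc 0 (dist p q))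
    (ht : t ∈ Icc 0 (dist p q)) : dist (γ s) (γ t) = dist s t :=
  (hγ.2.2 s hs t ht).trans (Real.dist_eq s t).symm

lemma dist_apply_left (hγ : IsGeodesicFrom γ p q) {s : ℝ} (hs : s ∈ Icc 0 (dist p q)) :
    dist (γ s) p = s := by
  rw [← hγ.1, hγ.dist_eq hs ⟨le_rfl, dist_nonneg⟩, Real.dist_eq, sub_zero, abs_of_nonneg hs.1]

lemma lipschitzOnWith_s5 (hγ : IsGeodesicFrom γ p q) : LipschitzOnWith 1 γ (Icc 0 (dist p q)) :=
  LipschitzOnWith.of_dist_le_mul fun s hs t ht => by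
    rw [hγ.dist_eq hs ht, NNReal.coe_one, one_mul]

end IsGeodesicFrom

lemma IsGeodesicSpace.exists_extend_curve (hX : IsGeodesicSpace X) {α : ℝ → X} {S : ℝ}
    (hα : LipschitzOnWith 1 α (Icc 0 S)) (y : X) :
    ∃ β : ℝ → X, EqOn β α (Icc 0 S) ∧ β (S + dist (α S) y) = y ∧
      LipschitzOnWith 1 β (Icc 0 (S + dist (α S) y)) ∧
      ∀ s ∈ Icc S (S + dist (α S) y), dist (β s) (α S) ≤ dist (α S) y := by
  obtain ⟨g, hg⟩ := hX (α S) y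
  set d := dist (α S) y
  set β : ℝ → X := fun s => if s ≤ S then α s else g (s - S)
  have hβα : EqOn β α (Icc 0 S) := fun s hs => if_pos hs.2
  have hmem : ∀ s ∈ Icc S (S + d), s - S ∈ Icc 0 d := fun s hs =>
    ⟨sub_nonneg.2 hs.1, by linarith [hs.2]⟩
  have hβg : ∀ s ∈ Icc S (S + d), β s = g (s - S) := by
    intro s hs
    by_cases hsS : s ≤ S
    · simp only [β, if_pos hsS]
      rw [le_antisymm hsS hs.1, sub_self, hg.1]
    · exact if_neg hsS
  refine ⟨β, hβα, ?_, ?_, fun s hs => ?_⟩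
  · rw [hβg _ ⟨le_add_of_nonneg_right dist_nonneg, le_rfl⟩, add_sub_cancel_left, hg.2.1]
  · refine LipschitzOnWith.Icc_glue (b := S) (fun s hs t ht => ?_) (fun s hs t ht => ?_)
    · rw [hβα hs, hβα ht]
      exact hα hs ht
    · rw [hβg s hs, hβg t ht, edist_dist, edist_dist, hg.dist_eq (hmem s hs) (hmem t ht)]
      simp [Real.dist_eq]
  · rw [hβg s hs, hg.dist_apply_left (hmem s hs)]
    exact (hmem s hs).2

/-- The concatenation of geodesics through `p 0, …, p N`, parametrized by arc length. -/
lemma IsGeodesicSpace.exists_chain_curve (hX : IsGeodesicSpace X) (p : ℕ → X) {N : ℕ}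
    (hN : 0 < N) :
    ∃ α : ℝ → X, α 0 = p 0 ∧
      α (∑ i ∈ Finset.range N, dist (p i) (p (i + 1))) = p N ∧
      LipschitzOnWith 1 α (Icc 0 (∑ i ∈ Finset.range N, dist (p i) (p (i + 1)))) ∧
      ∀ s ∈ Icc 0 (∑ i ∈ Finset.range N, dist (p i) (p (i + 1))),
        ∃ i < N, dist (α s) (p i) ≤ dist (p i) (p (i + 1)) := by
  induction N, hN using Nat.le_induction with
  | base =>
    obtain ⟨g, hg⟩ := hX (p 0) (p 1)
    refine ⟨g, hg.1, by simpa using hg.2.1, by simpa using hg.lipschitzOnWith_s5, fun s hs => ?_⟩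
    simp only [Finset.sum_range_one, zero_add] at hs ⊢
    exact ⟨0, Nat.one_pos, (hg.dist_apply_left hs).trans_le hs.2⟩
  | succ N hN ih =>
    obtain ⟨α, hα0, hαS, hαlip, hαnear⟩ := ih
    set S := ∑ i ∈ Finset.range N, dist (p i) (p (i + 1))
    have hS : 0 ≤ S := Finset.sum_nonneg fun _ _ => dist_nonneg
    obtain ⟨β, hβα, hβS, hβlip, hβnear⟩ := hX.exists_extend_curve hαlip (p (N + 1))
    rw [hαS] at hβS hβlip hβnear
    rw [Finset.sum_range_succ]
    refine ⟨β, by rw [hβα ⟨le_rfl, hS⟩, hα0], hβS, hβlip, fun s hs => ?_⟩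
    by_cases hsS : s ≤ S
    · obtain ⟨i, hi, hnear⟩ := hαnear s ⟨hs.1, hsS⟩
      exact ⟨i, Nat.lt_succ_of_lt hi, by rwa [hβα ⟨hs.1, hsS⟩]⟩
    · exact ⟨N, Nat.lt_succ_self N, hβnear s ⟨le_of_not_ge hsS, hs.2⟩⟩

end Geodesic

section Recurrence

variable {X : Type*} [MetricSpace X] {Z : Set X} {ρ : ℝ → ℝ}

@[simp]
lemma mem_recRemoved_iff {y z z' : X} :
    y ∈ recRemoved Z z z' ↔ y ∈ Z ∧ dist z z' / 3 ≤ dist y z ∧ dist z z' / 3 ≤ dist y z' := by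
  simp [recRemoved, not_or]

lemma IsRecurrentWith.exists_near_chain (hX : IsGeodesicSpace X) (hρ : IsRecurrentWith Z ρ)
    {q R : ℝ} (hq : 1 ≤ q) (hR : 0 < R) (hρR : ρ q < R) {p : ℕ → X} {N : ℕ} (hN : 0 < N)
    (hp0 : p 0 ∈ Z) (hpN : p N ∈ Z)
    (hlen : ∑ i ∈ Finset.range N, dist (p i) (p (i + 1)) ≤ q * dist (p 0) (p N)) :
    ∃ i < N, ∃ y ∈ recRemoved Z (p 0) (p N), dist (p i) y < R + dist (p i) (p (i + 1)) := by
  obtain ⟨α, hα0, hαN, hαlip, hαnear⟩ := hX.exists_chain_curve p hN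
  set S := ∑ i ∈ Finset.range N, dist (p i) (p (i + 1))
  have hS : 0 ≤ S := Finset.sum_nonneg fun _ _ => dist_nonneg
  have hvar : eVariationOn α (Icc 0 S) ≤ ENNReal.ofReal (q * dist (α 0) (α S)) := by
    have := hαlip.comp_eVariationOn_le (mapsTo_id (Icc 0 S))
    rw [Function.comp_id, eVariationOn_id_Icc, ENNReal.coe_one, one_mul, sub_zero] at this
    rw [hα0, hαN]
    exact this.trans (ENNReal.ofReal_le_ofReal hlen)
  obtain ⟨s, hs, hsZ⟩ := hρ q hq 0 S hS α hαlip.continuousOn (hα0 ▸ hp0) (hαN ▸ hpN) hvar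
  rw [hα0, hαN] at hsZ
  obtain ⟨y, hy, hsy⟩ := infEDist_lt_iff.1 <|
    hsZ.trans_lt ((ENNReal.ofReal_lt_ofReal_iff hR).2 hρR)
  obtain ⟨i, hi, hnear⟩ := hαnear s hs
  refine ⟨i, hi, y, hy, ?_⟩
  calc dist (p i) y ≤ dist (α s) (p i) + dist (α s) y := dist_triangle_left _ _ _
    _ < dist (p i) (p (i + 1)) + R := add_lt_add_of_le_of_lt hnear (edist_lt_ofReal.1 hsy)
    _ = R + dist (p i) (p (i + 1)) := add_comm _ _

end Recurrence

section Discrete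

variable {X : Type*}

def IsDiscreteQuasiGeodesic [PseudoMetricSpace X] (c l μ : ℝ) (n : ℕ) (x : ℕ → X) : Prop :=
  (∀ i < n, dist (x i) (x (i + 1)) ≤ c) ∧
    ∀ i j, i ≤ j → j ≤ n → (j - i : ℝ) ≤ l * dist (x i) (x j) + μ

namespace IsDiscreteQuasiGeodesic

variable [PseudoMetricSpace X] {c l μ : ℝ} {n : ℕ} {x : ℕ → X}

lemma dist_le (hx : IsDiscreteQuasiGeodesic c l μ n x) {i j : ℕ} (hij : i ≤ j) (hj : j ≤ n) :
    dist (x i) (x j) ≤ c * (j - i) :=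
  calc dist (x i) (x j) ≤ ∑ k ∈ Finset.Ico i j, dist (x k) (x (k + 1)) :=
        dist_le_Ico_sum_dist x hij
    _ ≤ (Finset.Ico i j).card • c := Finset.sum_le_card_nsmul _ _ _ fun k hk =>
        hx.1 k ((Finset.mem_Ico.1 hk).2.trans_le hj)
    _ = c * (j - i) := by rw [Nat.card_Ico, nsmul_eq_mul, Nat.cast_sub hij, mul_comm]

lemma shift (hx : IsDiscreteQuasiGeodesic c l μ n x) {i j : ℕ} (hij : i ≤ j) (hj : j ≤ n) :
    IsDiscreteQuasiGeodesic c l μ (j - i) (fun k => x (i + k)) := by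
  refine ⟨fun k hk => hx.1 (i + k) (by omega), fun k k' hkk' hk' => ?_⟩
  have := hx.2 (i + k) (i + k') (by omega) (by omega)
  push_cast at this
  linarith

lemma lt_dist_of_lt (hx : IsDiscreteQuasiGeodesic c l μ n x) (hl : 0 ≤ l) {z₁ z₂ : X}
    {r D : ℝ} (h₁ : dist (x 0) z₁ ≤ r) (h₂ : dist (x n) z₂ ≤ r) (hn : l * (D + 2 * r) + μ < n) :
    D < dist z₁ z₂ := by
  have hxd : dist (x 0) (x n) ≤ dist z₁ z₂ + 2 * r := by
    linarith [dist_triangle4 (x 0) z₁ z₂ (x n), dist_comm (x n) z₂]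
  have := hx.2 0 n (Nat.zero_le n) le_rfl
  push_cast at this
  by_contra! h
  linarith [mul_le_mul_of_nonneg_left hxd hl, mul_le_mul_of_nonneg_left h hl]

end IsDiscreteQuasiGeodesic

namespace IsQuasiGeodesicOn

variable [MetricSpace X] {L A a b : ℝ} {γ : ℝ → X}

lemma isDiscreteQuasiGeodesic (hγ : IsQuasiGeodesicOn L A a b γ) (hL : 0 < L) :
    IsDiscreteQuasiGeodesic (L + A) L (L * A + 1) ⌈b - a⌉₊ (fun i => γ (min (a + i) b)) := by
  have hmem : ∀ i : ℕ, min (a + i) b ∈ Icc a b := fun i =>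
    ⟨le_min (le_add_of_nonneg_right i.cast_nonneg) hγ.1, min_le_right _ _⟩
  refine ⟨fun i _ => ?_, fun i j hij hj => ?_⟩
  · have hstep : |min (a + i) b - min (a + ↑(i + 1)) b| ≤ 1 := by
      rw [abs_le]
      push_cast
      constructor <;> rcases min_cases (a + i) b with h | h <;>
        rcases min_cases (a + (i + 1)) b with h' | h' <;> linarith
    have := (hγ.2 _ (hmem i) _ (hmem (i + 1))).2
    linarith [mul_le_mul_of_nonneg_left hstep hL.le]
  · have hj' : (j : ℝ) < b - a + 1 :=
      (Nat.cast_le.2 hj).trans_lt (Nat.ceil_lt_add_one (by linarith [hγ.1]))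
    have hgap : (j - i : ℝ) - 1 ≤ |min (a + i) b - min (a + j) b| := by
      have : (i : ℝ) ≤ j := Nat.cast_le.2 hij
      rw [abs_sub_comm]
      refine le_trans ?_ (le_abs_self _)
      rcases min_cases (a + i) b with h | h <;> rcases min_cases (a + j) b with h' | h' <;>
        linarith
    have := (hγ.2 _ (hmem i) _ (hmem j)).1
    rw [sub_le_iff_le_add, div_le_iff₀ hL] at this
    linarith

lemma exists_sample_near (hγ : IsQuasiGeodesicOn L A a b γ) (hL : 0 ≤ L) {s : ℝ}
    (hs : s ∈ Icc a b) : ∃ k ≤ ⌈b - a⌉₊, dist (γ s) (γ (min (a + k) b)) ≤ L + A := by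
  have hsa : 0 ≤ s - a := sub_nonneg.2 hs.1
  have hk : a + ⌊s - a⌋₊ ≤ s := by linarith [Nat.floor_le hsa]
  refine ⟨⌊s - a⌋₊, (Nat.floor_le_ceil _).trans (Nat.ceil_mono (by linarith [hs.2])), ?_⟩
  rw [min_eq_left (hk.trans hs.2)]
  have hgap : |s - (a + ⌊s - a⌋₊)| ≤ 1 := by
    rw [abs_of_nonneg (by linarith)]
    linarith [Nat.lt_floor_add_one (s - a)]
  have := (hγ.2 s hs _ ⟨by linarith [(⌊s - a⌋₊).cast_nonneg (α := ℝ)], hk.trans hs.2⟩).2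
  linarith [mul_le_mul_of_nonneg_left hgap hL]

end IsQuasiGeodesicOn

end Discrete

lemma Nat.exists_gap_around {P : ℕ → Prop} {n k : ℕ} (h0 : P 0) (hn : P n) (hk : k ≤ n) :
    ∃ i j, i ≤ k ∧ k ≤ j ∧ j ≤ n ∧ P i ∧ P j ∧ ∀ m, i < m → m < j → ¬ P m := by
  classical
  have hex : ∃ d, P (k + d) := ⟨n - k, by rwa [Nat.add_sub_cancel' hk]⟩
  have hfind : Nat.find hex ≤ n - k := Nat.find_min' hex (by rwa [Nat.add_sub_cancel' hk])
  refine ⟨Nat.findGreatest P k, k + Nat.find hex, Nat.findGreatest_le k, by omega, by omega,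
    Nat.findGreatest_spec (Nat.zero_le k) h0, Nat.find_spec hex, fun m him hmj => ?_⟩
  rcases le_or_gt m k with hmk | hkm
  · exact Nat.findGreatest_is_greatest him hmk
  · have := Nat.find_min hex (m := m - k) (by omega)
    rwa [Nat.add_sub_cancel' hkm.le] at this

section Morse

variable {X : Type*} [MetricSpace X] {Z : Set X} {ρ : ℝ → ℝ}

lemma IsRecurrentWith.exists_excursion_length_le (hX : IsGeodesicSpace X)
    (hρ : IsRecurrentWith Z ρ) {c l μ r : ℝ} (hc : 0 ≤ c) (hl : 0 ≤ l) (hcr : c < r)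
    (hρr : ρ (c * l + 1) + c < r) :
    ∃ B : ℝ, ∀ (m : ℕ) (x : ℕ → X) (z₁ z₂ : X), IsDiscreteQuasiGeodesic c l μ m x →
      z₁ ∈ Z → z₂ ∈ Z → dist (x 0) z₁ ≤ r → dist (x m) z₂ ≤ r →
      (∀ k, 0 < k → k < m → ∀ z ∈ Z, r < dist (x k) z) → (m : ℝ) ≤ B := by
  set q := c * l + 1
  -- `2rq + cμ` makes the chain below `q`-short; `9r` keeps the recurrence point off its ends.
  set dmin := max (2 * r * q + c * μ) (9 * r)
  refine ⟨l * (dmin + 2 * r) + μ, fun m x z₁ z₂ hx hz₁ hz₂ h₁ h₂ hfar => ?_⟩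
  by_contra! hm
  set d := dist z₁ z₂
  have hd : dmin < d := hx.lt_dist_of_lt hl h₁ h₂ hm
  have hmd : (m : ℝ) ≤ l * (d + 2 * r) + μ :=
    not_lt.1 fun h => lt_irrefl d (hx.lt_dist_of_lt hl h₁ h₂ h)
  have hd₁ : 2 * r * q + c * μ < d := (le_max_left _ _).trans_lt hd
  have hd₂ : 9 * r < d := (le_max_right _ _).trans_lt hd
  let p : ℕ → X := fun i => if i = 0 then z₁ else if i ≤ m + 1 then x (i - 1) else z₂
  have hp0 : p 0 = z₁ := if_pos rfl
  have hpx : ∀ j ≤ m, p (j + 1) = x j := fun j hj => by simp [p, hj]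
  have hpm : p (m + 2) = z₂ := by simp [p]
  have hlen : ∑ i ∈ Finset.range (m + 2), dist (p i) (p (i + 1)) ≤
      q * dist (p 0) (p (m + 2)) := by
    rw [Finset.sum_range_succ, Finset.sum_range_succ', hp0, hpm, hpx 0 (Nat.zero_le m),
      hpx m le_rfl]
    have hsteps : ∑ j ∈ Finset.range m, dist (p (j + 1)) (p (j + 1 + 1)) ≤ m * c := by
      refine (Finset.sum_le_card_nsmul _ _ c fun j hj => ?_).trans_eq (by simp)
      have hj := Finset.mem_range.1 hj
      rw [hpx j hj.le, hpx (j + 1) hj]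
      exact hx.1 j hj
    linarith [dist_comm z₁ (x 0), mul_le_mul_of_nonneg_right hmd hc]
  obtain ⟨i, hi, y, hy, hpy⟩ := hρ.exists_near_chain hX (R := r - c)
    (le_add_of_nonneg_left (mul_nonneg hc hl)) (sub_pos.2 hcr) (by linarith)
    (p := p) (N := m + 2) (by omega) (hp0 ▸ hz₁) (hpm ▸ hz₂) hlen
  rw [hp0, hpm, mem_recRemoved_iff] at hy
  obtain ⟨hyZ, hy₁, hy₂⟩ := hy
  obtain _ | j := i
  · rw [hp0, hpx 0 (Nat.zero_le m)] at hpy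
    linarith [dist_comm z₁ (x 0), dist_comm y z₁]
  rw [hpx j (by omega)] at hpy
  obtain hjm | rfl := (show j < m ∨ j = m by omega)
  · rw [hpx (j + 1) hjm] at hpy
    have hxy : dist (x j) y < r := by linarith [hx.1 j hjm]
    rcases Nat.eq_zero_or_pos j with rfl | hj
    · linarith [dist_triangle z₁ (x 0) y, dist_comm z₁ (x 0), dist_comm y z₁]
    · exact (hfar j hj hjm y hyZ).not_gt hxy
  · rw [hpm] at hpy
    linarith [dist_triangle z₂ (x j) y, dist_comm z₂ (x j), dist_comm y z₂]

lemma IsRecurrentWith.exists_infDist_le (hX : IsGeodesicSpace X) (hρ : IsRecurrentWith Z ρ)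
    {c l μ : ℝ} (hc : 0 ≤ c) (hl : 0 ≤ l) :
    ∃ M : ℝ, ∀ (n : ℕ) (x : ℕ → X), IsDiscreteQuasiGeodesic c l μ n x → x 0 ∈ Z → x n ∈ Z →
      ∀ k ≤ n, infDist (x k) Z ≤ M := by
  set r := max (ρ (c * l + 1)) 0 + c + 1
  have hr : c < r := by linarith [le_max_right (ρ (c * l + 1)) 0]
  obtain ⟨B, hB⟩ := hρ.exists_excursion_length_le hX hc hl hr
    (by linarith [le_max_left (ρ (c * l + 1)) 0])
  refine ⟨r + c * B, fun n x hx hx0 hxn k hk => ?_⟩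
  obtain ⟨i, j, hik, hkj, hjn, ⟨z₁, hz₁, hxz₁⟩, ⟨z₂, hz₂, hxz₂⟩, hfar⟩ :=
    Nat.exists_gap_around (P := fun i => ∃ z ∈ Z, dist (x i) z ≤ r)
      ⟨x 0, hx0, (dist_self _).trans_le (hc.trans hr.le)⟩
      ⟨x n, hxn, (dist_self _).trans_le (hc.trans hr.le)⟩ hk
  have hji : ((j - i : ℕ) : ℝ) ≤ B :=
    hB (j - i) (fun k => x (i + k)) z₁ z₂ (hx.shift (hik.trans hkj) hjn) hz₁ hz₂ hxz₁
      (by rwa [Nat.add_sub_cancel' (hik.trans hkj)]) fun k hk hkm z hz =>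
        lt_of_not_ge fun h => hfar (i + k) (by omega) (by omega) ⟨z, hz, h⟩
  rw [Nat.cast_sub (hik.trans hkj)] at hji
  have hki : c * (k - i) ≤ c * (j - i) :=
    mul_le_mul_of_nonneg_left (by linarith [(Nat.cast_le (α := ℝ)).2 hkj]) hc
  calc infDist (x k) Z ≤ dist (x k) z₁ := infDist_le_dist_of_mem hz₁
    _ ≤ dist (x i) (x k) + dist (x i) z₁ := dist_triangle_left _ _ _
    _ ≤ c * (k - i) + r := add_le_add (hx.dist_le hik (hkj.trans hjn)) hxz₁
    _ ≤ r + c * B := by linarith [mul_le_mul_of_nonneg_left hji hc]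

end Morse

theorem recurrent_implies_morse_general
    {X : Type*} [MetricSpace X] (hX : IsGeodesicSpace X)
    (Z : Set X) (hrec : IsRecurrent Z) :
    IsMorse Z := by
  obtain ⟨ρ, hρ⟩ := hrec
  intro L hL A hA
  obtain ⟨M, hM⟩ := hρ.exists_infDist_le hX (c := L + A) (l := L) (μ := L * A + 1)
    (by linarith) (by linarith)
  refine ⟨M + (L + A), fun a b γ hγ ha hb s hs => ?_⟩
  obtain ⟨k, hk, hsk⟩ := hγ.exists_sample_near (by linarith) hs
  have hx0 : γ (min (a + (0 : ℕ)) b) ∈ Z := by simpa [hγ.1] using ha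
  have hxn : γ (min (a + ⌈b - a⌉₊) b) ∈ Z := by
    rwa [min_eq_right (by linarith [Nat.le_ceil (b - a)])]
  calc infDist (γ s) Z ≤ infDist (γ (min (a + k) b)) Z + dist (γ s) (γ (min (a + k) b)) :=
        infDist_le_infDist_add_dist
    _ ≤ M + (L + A) :=
        add_le_add (hM _ _ (hγ.isDiscreteQuasiGeodesic (by linarith)) hx0 hxn k hk) hsk

/-- In a geodesic metric space, a closed unbounded recurrent subset is Morse. -/
theorem recurrent_implies_morse
    {X : Type*} [MetricSpace X] (hX : IsGeodesicSpace X)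
    (Z : Set X) (hZclosed : IsClosed Z) (hZunbdd : ¬ Bornology.IsBounded Z)
    (hrec : IsRecurrent Z) :
    IsMorse Z :=
  recurrent_implies_morse_general hX Z hrec
end

section
/- Let X be a δ-hyperbolic geodesic metric space and let Z be a closed, unbounded, quasi-convex subset of X. Then Z is strongly contracting: there exists C ≥ 0 such that diam(π_Z(x) ∪ π_Z(y)) ≤ C for all x, y ∈ X with d(x,y) ≤ d(x,Z). -/
open Metric Set

section Helpers

variable {X : Type*} [MetricSpace X]

private lemma geoDistLeft {γ : ℝ → X} {p q : X} (h : IsGeodesicFrom γ p q)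
    {t : ℝ} (ht : t ∈ Set.Icc (0:ℝ) (dist p q)) : dist p (γ t) = t := by
  have h0 : (0:ℝ) ∈ Set.Icc (0:ℝ) (dist p q) := ⟨le_refl _, dist_nonneg⟩
  have hd := h.2.2 0 h0 t ht
  rw [h.1] at hd
  rw [hd, zero_sub, abs_neg, abs_of_nonneg ht.1]

private lemma geoDistRight {γ : ℝ → X} {p q : X} (h : IsGeodesicFrom γ p q)
    {t : ℝ} (ht : t ∈ Set.Icc (0:ℝ) (dist p q)) : dist (γ t) q = dist p q - t := by
  have h1 : dist p q ∈ Set.Icc (0:ℝ) (dist p q) := ⟨dist_nonneg, le_refl _⟩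
  have hd := h.2.2 t ht (dist p q) h1
  rw [h.2.1] at hd
  rw [hd, abs_of_nonpos (by linarith [ht.2]), neg_sub]

/-- Key lemma: a geodesic from `x` to any `z ∈ Z` passes within `3δ + C + 4` of any
nearest-point projection `p` of `x` to `Z`, at parameter `max 0 (d(x,Z) - (δ+C+2))`. -/
private lemma lemA {δ C : ℝ} (hδ : 0 ≤ δ) (hC0 : 0 ≤ C)
    (hhyp : IsDeltaHyperbolic X δ) (hgeo : IsGeodesicSpace X)
    {Z : Set X}
    (hqc : ∀ p ∈ Z, ∀ q ∈ Z, ∀ γ : ℝ → X, IsGeodesicFrom γ p q →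
      ∀ t ∈ Set.Icc (0:ℝ) (dist p q), Metric.infDist (γ t) Z ≤ C)
    {x p z : X} (hp : p ∈ projSet Z x) (hz : z ∈ Z)
    {γ₁ : ℝ → X} (hγ₁ : IsGeodesicFrom γ₁ x z) :
    max 0 (Metric.infDist x Z - (δ + C + 2)) ∈ Set.Icc (0:ℝ) (dist x z) ∧
      dist (γ₁ (max 0 (Metric.infDist x Z - (δ + C + 2)))) p ≤ 3*δ + C + 4 := by
  obtain ⟨hpZ, hxp⟩ := hp
  have hR0 : 0 ≤ Metric.infDist x Z := Metric.infDist_nonneg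
  have hRz : Metric.infDist x Z ≤ dist x z := Metric.infDist_le_dist_of_mem hz
  set R := Metric.infDist x Z with hRdef
  set t₀ := max 0 (R - (δ + C + 2)) with ht₀def
  have ht₀ : t₀ ∈ Set.Icc (0:ℝ) (dist x z) :=
    ⟨le_max_left _ _, max_le dist_nonneg (by linarith)⟩
  refine ⟨ht₀, ?_⟩
  have hxm : dist x (γ₁ t₀) = t₀ := geoDistLeft hγ₁ ht₀
  rcases le_or_gt R (δ + C + 2) with hsmall | hbig
  · have h0 : t₀ = 0 := max_eq_left (by linarith)
    rw [h0, hγ₁.1, hxp]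
    linarith
  · have ht0eq : t₀ = R - (δ + C + 2) := max_eq_right (by linarith)
    obtain ⟨γ₂, hγ₂⟩ := hgeo z p
    obtain ⟨γ₃, hγ₃⟩ := hgeo x p
    have hthin := hhyp x z p γ₁ γ₂ γ₃ hγ₁ hγ₂ hγ₃ t₀ ht₀
    have hne : (γ₂ '' Set.Icc (0:ℝ) (dist z p) ∪ γ₃ '' Set.Icc (0:ℝ) (dist x p)).Nonempty :=
      ⟨γ₂ 0, Or.inl ⟨0, ⟨le_refl _, dist_nonneg⟩, rfl⟩⟩
    obtain ⟨u, hu, hmu⟩ :=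
      (Metric.infDist_lt_iff hne).mp (lt_of_le_of_lt hthin (by linarith : δ < δ + 1))
    rcases hu with hu2 | hu3
    · obtain ⟨s, hs, rfl⟩ := hu2
      have huZ : Metric.infDist (γ₂ s) Z ≤ C := hqc z hz p hpZ γ₂ hγ₂ s hs
      have h1 : Metric.infDist x Z ≤ Metric.infDist (γ₁ t₀) Z + dist x (γ₁ t₀) :=
        Metric.infDist_le_infDist_add_dist
      have h2 : Metric.infDist (γ₁ t₀) Z ≤ Metric.infDist (γ₂ s) Z + dist (γ₁ t₀) (γ₂ s) :=
        Metric.infDist_le_infDist_add_dist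
      rw [hxm] at h1
      exfalso
      have := hmu.le
      linarith
    · obtain ⟨s, hs, rfl⟩ := hu3
      have hxu : dist x (γ₃ s) = s := geoDistLeft hγ₃ hs
      have hup : dist (γ₃ s) p = dist x p - s := geoDistRight hγ₃ hs
      have htri := dist_triangle x (γ₃ s) (γ₁ t₀)
      have hc1 : dist (γ₃ s) (γ₁ t₀) = dist (γ₁ t₀) (γ₃ s) := dist_comm _ _
      have htri2 := dist_triangle (γ₁ t₀) (γ₃ s) p
      have := hmu.le
      linarith

/-- Two projections of the same point are uniformly close. -/
private lemma sameBound {δ C : ℝ} (hδ : 0 ≤ δ) (hC0 : 0 ≤ C)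
    (hhyp : IsDeltaHyperbolic X δ) (hgeo : IsGeodesicSpace X)
    {Z : Set X}
    (hqc : ∀ p ∈ Z, ∀ q ∈ Z, ∀ γ : ℝ → X, IsGeodesicFrom γ p q →
      ∀ t ∈ Set.Icc (0:ℝ) (dist p q), Metric.infDist (γ t) Z ≤ C)
    {x p p' : X} (hp : p ∈ projSet Z x) (hp' : p' ∈ projSet Z x) :
    dist p p' ≤ 12*δ + 4*C + 16 := by
  obtain ⟨γ₁, hγ₁⟩ := hgeo x p'
  obtain ⟨ht₀, hmp⟩ := lemA hδ hC0 hhyp hgeo hqc hp hp'.1 hγ₁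
  set t₀ := max 0 (Metric.infDist x Z - (δ + C + 2)) with ht₀def
  have hmp' : dist (γ₁ t₀) p' = dist x p' - t₀ := geoDistRight hγ₁ ht₀
  have hxp' : dist x p' = Metric.infDist x Z := hp'.2
  have ht₀lb : Metric.infDist x Z - (δ + C + 2) ≤ t₀ := le_max_right _ _
  have htri := dist_triangle p (γ₁ t₀) p'
  have hc := dist_comm p (γ₁ t₀)
  linarith

/-- Projections of two points with `d(x,y) ≤ d(x,Z)` are uniformly close. -/
private lemma crossBound {δ C : ℝ} (hδ : 0 ≤ δ) (hC0 : 0 ≤ C)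
    (hhyp : IsDeltaHyperbolic X δ) (hgeo : IsGeodesicSpace X)
    {Z : Set X}
    (hqc : ∀ p ∈ Z, ∀ q ∈ Z, ∀ γ : ℝ → X, IsGeodesicFrom γ p q →
      ∀ t ∈ Set.Icc (0:ℝ) (dist p q), Metric.infDist (γ t) Z ≤ C)
    {x y p q : X} (hxy : dist x y ≤ Metric.infDist x Z)
    (hp : p ∈ projSet Z x) (hq : q ∈ projSet Z y) :
    dist p q ≤ 12*δ + 4*C + 16 := by
  obtain ⟨γ₁, hγ₁⟩ := hgeo x q
  obtain ⟨ht₀, hmp⟩ := lemA hδ hC0 hhyp hgeo hqc hp hq.1 hγ₁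
  set t₀ := max 0 (Metric.infDist x Z - (δ + C + 2)) with ht₀def
  have hxm : dist x (γ₁ t₀) = t₀ := geoDistLeft hγ₁ ht₀
  have ht₀lb : Metric.infDist x Z - (δ + C + 2) ≤ t₀ := le_max_right _ _
  obtain ⟨γ₂, hγ₂⟩ := hgeo q y
  obtain ⟨γ₃, hγ₃⟩ := hgeo x y
  have hthin := hhyp x q y γ₁ γ₂ γ₃ hγ₁ hγ₂ hγ₃ t₀ ht₀
  have hne : (γ₂ '' Set.Icc (0:ℝ) (dist q y) ∪ γ₃ '' Set.Icc (0:ℝ) (dist x y)).Nonempty :=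
    ⟨γ₂ 0, Or.inl ⟨0, ⟨le_refl _, dist_nonneg⟩, rfl⟩⟩
  obtain ⟨u, hu, hmu⟩ :=
    (Metric.infDist_lt_iff hne).mp (lt_of_le_of_lt hthin (by linarith : δ < δ + 1))
  have hyq : dist y q = Metric.infDist y Z := hq.2
  have hpZ : p ∈ Z := hp.1
  have hmu' := hmu.le
  rcases hu with hu2 | hu3
  · obtain ⟨s, hs, rfl⟩ := hu2
    have hqu : dist q (γ₂ s) = s := geoDistLeft hγ₂ hs
    have huy : dist (γ₂ s) y = dist q y - s := geoDistRight hγ₂ hs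
    have h1 : Metric.infDist y Z ≤ Metric.infDist (γ₂ s) Z + dist y (γ₂ s) :=
      Metric.infDist_le_infDist_add_dist
    have h2 : Metric.infDist (γ₂ s) Z ≤ dist (γ₂ s) p := Metric.infDist_le_dist_of_mem hpZ
    have h3 := dist_triangle (γ₂ s) (γ₁ t₀) p
    have h5 := dist_triangle p (γ₂ s) q
    have h6 := dist_triangle p (γ₁ t₀) (γ₂ s)
    have hc1 : dist y (γ₂ s) = dist (γ₂ s) y := dist_comm _ _
    have hc2 : dist q y = dist y q := dist_comm _ _
    have hc3 : dist (γ₂ s) (γ₁ t₀) = dist (γ₁ t₀) (γ₂ s) := dist_comm _ _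
    have hc4 : dist p (γ₁ t₀) = dist (γ₁ t₀) p := dist_comm _ _
    have hc5 : dist (γ₂ s) q = dist q (γ₂ s) := dist_comm _ _
    linarith
  · obtain ⟨s, hs, rfl⟩ := hu3
    have hxu : dist x (γ₃ s) = s := geoDistLeft hγ₃ hs
    have huy : dist (γ₃ s) y = dist x y - s := geoDistRight hγ₃ hs
    have hslb := dist_triangle x (γ₃ s) (γ₁ t₀)
    have h1 : Metric.infDist y Z ≤ Metric.infDist (γ₃ s) Z + dist y (γ₃ s) :=
      Metric.infDist_le_infDist_add_dist
    have h2 : Metric.infDist (γ₃ s) Z ≤ dist (γ₃ s) p := Metric.infDist_le_dist_of_mem hpZ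
    have h3 := dist_triangle (γ₃ s) (γ₁ t₀) p
    have h4 := dist_triangle p (γ₃ s) y
    have h5 := dist_triangle p (γ₁ t₀) (γ₃ s)
    have h6 := dist_triangle p y q
    have hc1 : dist y (γ₃ s) = dist (γ₃ s) y := dist_comm _ _
    have hc2 : dist (γ₃ s) (γ₁ t₀) = dist (γ₁ t₀) (γ₃ s) := dist_comm _ _
    have hc3 : dist p (γ₁ t₀) = dist (γ₁ t₀) p := dist_comm _ _
    linarith

end Helpers

/-- In a `δ`-hyperbolic geodesic metric space, a closed unbounded quasi-convex subset is
strongly contracting. -/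
theorem quasiconvex_implies_strongly_contracting_hyperbolic
    {X : Type*} [MetricSpace X] (δ : ℝ) (hδ : 0 ≤ δ)
    (hhyp : IsDeltaHyperbolic X δ) (hgeo : IsGeodesicSpace X)
    (Z : Set X) (hZclosed : IsClosed Z) (hZunbdd : ¬ Bornology.IsBounded Z)
    (hqc : IsQuasiConvex Z) :
    IsStronglyContracting Z := by
  obtain ⟨C, hC0, hqcf⟩ := hqc
  refine ⟨12*δ + 4*C + 16, by linarith, ?_⟩
  intro x y hxy p hpmem p' hp'mem
  rcases hpmem with hp | hp <;> rcases hp'mem with hp' | hp'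
  · exact sameBound hδ hC0 hhyp hgeo hqcf hp hp'
  · exact crossBound hδ hC0 hhyp hgeo hqcf hxy hp hp'
  · rw [dist_comm]
    exact crossBound hδ hC0 hhyp hgeo hqcf hxy hp' hp
  · exact sameBound hδ hC0 hhyp hgeo hqcf hp hp'
end

section
/- Let X be a geodesic metric space, Z ⊆ X closed, and D ≥ 0. Let x, y ∈ X satisfy d(x,y) ≤ d(x,Z) and d(y,Z) ≤ d(x,Z), let x' ∈ π_Z(x), y' ∈ π_Z(y), set P := d(x',y'), and assume P > 12D. Let Z' denote Z with the open balls of radius P/3 about x' and y' removed. If w ∈ X satisfies d(w,Z') ≤ D, then w does not lie on the concatenation of geodesic segments [x',x] + [x,y] + [y,y']. -/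
open Metric Set

/-- Observation (*): if `d(w, Z') ≤ D`, then `w` does not lie on the concatenation
`[x',x] + [x,y] + [y,y']`. -/
theorem avoid_concatenation
    {X : Type*} [MetricSpace X] (hgeo : IsGeodesicSpace X)
    (Z : Set X) (hZclosed : IsClosed Z)
    (D : ℝ) (hD : 0 ≤ D) (x y : X)
    (hxy : dist x y ≤ Metric.infDist x Z)
    (hyx : Metric.infDist y Z ≤ Metric.infDist x Z)
    (x' y' : X) (hx' : x' ∈ projSet Z x) (hy' : y' ∈ projSet Z y)
    (P : ℝ) (hP : P = dist x' y') (hP12 : 12 * D < P)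
    (Z' : Set X) (hZ' : Z' = Z \ (Metric.ball x' (P / 3) ∪ Metric.ball y' (P / 3)))
    (γ₁ γ₂ γ₃ : ℝ → X)
    (h₁ : IsGeodesicFrom γ₁ x' x) (h₂ : IsGeodesicFrom γ₂ x y)
    (h₃ : IsGeodesicFrom γ₃ y y')
    (w : X) (hw : EMetric.infEdist w Z' ≤ ENNReal.ofReal D) :
    w ∉ γ₁ '' Set.Icc (0 : ℝ) (dist x' x) ∪ γ₂ '' Set.Icc (0 : ℝ) (dist x y) ∪
        γ₃ '' Set.Icc (0 : ℝ) (dist y y') := by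
  have hPpos : 0 < P := by have := dist_nonneg (x := x') (y := y'); linarith [hP12, hD]
  have hlt : EMetric.infEdist w Z' < ENNReal.ofReal (P / 12) := by
    refine lt_of_le_of_lt hw ?_
    rw [ENNReal.ofReal_lt_ofReal_iff (by linarith)]
    linarith
  obtain ⟨z', hz'Z', hz'e⟩ := EMetric.infEdist_lt_iff.mp hlt
  have hE : dist w z' < P / 12 := by
    rwa [edist_lt_ofReal] at hz'e
  rw [hZ'] at hz'Z'
  obtain ⟨hz'Z, hz'balls⟩ := hz'Z'
  have hz'x' : P / 3 ≤ dist z' x' := by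
    by_contra h
    exact hz'balls (Or.inl (Metric.mem_ball.mpr (by linarith)))
  have hz'y' : P / 3 ≤ dist z' y' := by
    by_contra h
    exact hz'balls (Or.inr (Metric.mem_ball.mpr (by linarith)))
  have hxZ : dist x x' = Metric.infDist x Z := hx'.2
  have hyZ : dist y y' = Metric.infDist y Z := hy'.2
  have hxz' : Metric.infDist x Z ≤ dist x z' := Metric.infDist_le_dist_of_mem hz'Z
  have hyz' : Metric.infDist y Z ≤ dist y z' := Metric.infDist_le_dist_of_mem hz'Z
  intro hmem
  obtain ⟨h₁0, h₁d, h₁iso⟩ := h₁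
  obtain ⟨h₂0, h₂d, h₂iso⟩ := h₂
  obtain ⟨h₃0, h₃d, h₃iso⟩ := h₃
  rcases hmem with (⟨t, ht, hwt⟩ | ⟨t, ht, hwt⟩) | ⟨t, ht, hwt⟩
  · -- w on [x', x]
    have hwx' : dist w x' = t := by
      have := h₁iso t ht 0 ⟨le_refl 0, dist_nonneg⟩
      rw [hwt, h₁0] at this
      rw [this, sub_zero, abs_of_nonneg ht.1]
    have hwx : dist w x = dist x' x - t := by
      have := h₁iso t ht (dist x' x) ⟨dist_nonneg, le_refl _⟩
      rw [hwt, h₁d] at this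
      rw [this, abs_of_nonpos (by linarith [ht.2])]
      ring
    have t1 : dist x z' ≤ dist x w + dist w z' := dist_triangle x w z'
    have t2 : dist x' z' ≤ dist x' w + dist w z' := dist_triangle x' w z'
    have c1 : dist x w = dist w x := dist_comm x w
    have c2 : dist x' w = dist w x' := dist_comm x' w
    have c3 : dist x' x = dist x x' := dist_comm x' x
    have c4 : dist z' x' = dist x' z' := dist_comm z' x'
    linarith
  · -- w on [x, y]
    have hwx : dist w x = t := by
      have := h₂iso t ht 0 ⟨le_refl 0, dist_nonneg⟩
      rw [hwt, h₂0] at this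
      rw [this, sub_zero, abs_of_nonneg ht.1]
    have hwy : dist w y = dist x y - t := by
      have := h₂iso t ht (dist x y) ⟨dist_nonneg, le_refl _⟩
      rw [hwt, h₂d] at this
      rw [this, abs_of_nonpos (by linarith [ht.2])]
      ring
    have t1 : dist x z' ≤ dist x w + dist w z' := dist_triangle x w z'
    have t2 : dist y z' ≤ dist y w + dist w z' := dist_triangle y w z'
    have t3 : dist y' z' ≤ dist y' y + dist y z' := dist_triangle y' y z'
    have c1 : dist x w = dist w x := dist_comm x w
    have c2 : dist y w = dist w y := dist_comm y w
    have c3 : dist y' y = dist y y' := dist_comm y' y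
    have c4 : dist z' y' = dist y' z' := dist_comm z' y'
    linarith
  · -- w on [y, y']
    have hwy : dist w y = t := by
      have := h₃iso t ht 0 ⟨le_refl 0, dist_nonneg⟩
      rw [hwt, h₃0] at this
      rw [this, sub_zero, abs_of_nonneg ht.1]
    have hwy' : dist w y' = dist y y' - t := by
      have := h₃iso t ht (dist y y') ⟨dist_nonneg, le_refl _⟩
      rw [hwt, h₃d] at this
      rw [this, abs_of_nonpos (by linarith [ht.2])]
      ring
    have t1 : dist y z' ≤ dist y w + dist w z' := dist_triangle y w z'
    have t2 : dist y' z' ≤ dist y' w + dist w z' := dist_triangle y' w z'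
    have c1 : dist y w = dist w y := dist_comm y w
    have c2 : dist y' w = dist w y' := dist_comm y' w
    have c4 : dist z' y' = dist y' z' := dist_comm z' y'
    linarith
end

section
/- Let X be a metric space, Z ⊆ X, and let x, y ∈ X satisfy d(x,y) ≤ d(x,Z). If w lies on a geodesic segment from x to y, then d(w,y) ≤ d(w,Z); consequently, for any y' ∈ π_Z(y) and any subset Z' ⊆ Z, d(y',Z') ≤ 4 d(w,Z'). -/
open Metric Set

/-
Since `w` lies between `x` and `y`, reaching `Z` from `x` through `w` costs at least
`d(x,y) = d(x,w) + d(w,y)`, hence `d(w,Z) ≥ d(w,y)`. Then `d(y',Z') ≤ d(y',y) + d(y,Z') ≤ 2 d(y,Z')`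
because `y'` is a closest point of `Z ⊇ Z'` to `y`, and `d(y,Z') ≤ d(y,w) + d(w,Z') ≤ 2 d(w,Z')`.
-/

section Betweenness

variable {X : Type*} [MetricSpace X]

theorem IsGeodesicFrom.dist_add_dist_eq {γ : ℝ → X} {x y : X}
    (hγ : IsGeodesicFrom γ x y) {t : ℝ} (ht : t ∈ Icc (0 : ℝ) (dist x y)) :
    dist x (γ t) + dist (γ t) y = dist x y := by
  obtain ⟨h0, h1, hiso⟩ := hγ
  have hend : dist x y ∈ Icc (0 : ℝ) (dist x y) := ⟨dist_nonneg, le_rfl⟩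
  have hxw := hiso 0 ⟨le_rfl, dist_nonneg⟩ t ht
  have hwy := hiso t ht (dist x y) hend
  rw [h0] at hxw
  rw [h1] at hwy
  rw [hxw, hwy, abs_of_nonpos (by linarith [ht.1]), abs_of_nonpos (by linarith [ht.2])]
  ring

theorem dist_le_infDist_of_dist_add_dist_eq {Z : Set X} {x y w : X}
    (hw : dist x w + dist w y = dist x y) (hxy : dist x y ≤ infDist x Z) :
    dist w y ≤ infDist w Z := by
  linarith [infDist_le_infDist_add_dist (x := x) (y := w) (s := Z)]

theorem infDist_le_two_mul_infDist_of_mem_projSet {Z Z' : Set X} {y y' : X}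
    (hy' : y' ∈ projSet Z y) (hZ' : Z' ⊆ Z) (hZ'ne : Z'.Nonempty) :
    infDist y' Z' ≤ 2 * infDist y Z' := by
  have hyy' : dist y' y ≤ infDist y Z' := by
    rw [dist_comm, hy'.2]
    exact infDist_le_infDist_of_subset hZ' hZ'ne
  linarith [infDist_le_infDist_add_dist (x := y') (y := y) (s := Z')]

theorem infDist_le_two_mul_infDist_of_dist_le_infDist {Z Z' : Set X} {y w : X}
    (hwy : dist w y ≤ infDist w Z) (hZ' : Z' ⊆ Z) (hZ'ne : Z'.Nonempty) :
    infDist y Z' ≤ 2 * infDist w Z' := by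
  have hwZ' : infDist w Z ≤ infDist w Z' := infDist_le_infDist_of_subset hZ' hZ'ne
  linarith [infDist_le_infDist_add_dist (x := y) (y := w) (s := Z'), dist_comm y w]

end Betweenness

theorem point_on_geodesic_close_to_far_end_general
    {X : Type*} [MetricSpace X] (Z : Set X) (x y : X)
    (hxy : dist x y ≤ Metric.infDist x Z)
    (γ : ℝ → X) (hγ : IsGeodesicFrom γ x y)
    (w : X) (hw : w ∈ γ '' Set.Icc (0 : ℝ) (dist x y)) :
    dist w y ≤ Metric.infDist w Z ∧
      ∀ y' ∈ projSet Z y, ∀ Z' : Set X, Z' ⊆ Z → Z'.Nonempty →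
        Metric.infDist y' Z' ≤ 4 * Metric.infDist w Z' := by
  obtain ⟨t, ht, rfl⟩ := hw
  have hwy : dist (γ t) y ≤ infDist (γ t) Z :=
    dist_le_infDist_of_dist_add_dist_eq (hγ.dist_add_dist_eq ht) hxy
  refine ⟨hwy, fun y' hy' Z' hZ' hZ'ne => ?_⟩
  linarith [infDist_le_two_mul_infDist_of_mem_projSet hy' hZ' hZ'ne,
    infDist_le_two_mul_infDist_of_dist_le_infDist hwy hZ' hZ'ne]

/-- If `d(x,y) ≤ d(x,Z)` and `w` lies on a geodesic segment from `x` to `y`, then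
`d(w,y) ≤ d(w,Z)`; consequently `d(y',Z') ≤ 4·d(w,Z')` for every `y' ∈ π_Z(y)` and every
nonempty subset `Z' ⊆ Z`. -/
theorem point_on_geodesic_close_to_far_end
    {X : Type*} [MetricSpace X] (Z : Set X) (hZne : Z.Nonempty) (x y : X)
    (hxy : dist x y ≤ Metric.infDist x Z)
    (γ : ℝ → X) (hγ : IsGeodesicFrom γ x y)
    (w : X) (hw : w ∈ γ '' Set.Icc (0 : ℝ) (dist x y)) :
    dist w y ≤ Metric.infDist w Z ∧
      ∀ y' ∈ projSet Z y, ∀ Z' : Set X, Z' ⊆ Z → Z'.Nonempty →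
        Metric.infDist y' Z' ≤ 4 * Metric.infDist w Z' :=
  point_on_geodesic_close_to_far_end_general Z x y hxy γ hγ w hw
end

section
/- Let X be a CAT(0) space and let x, y, y' ∈ X satisfy d(x,y) ≤ d(x,y'). Let s ≥ 0 with s ≤ d(y',x) and s ≤ d(y',y), let e be the point on the geodesic segment [y',x] at distance s from y', and let b be the point on the geodesic segment [y',y] at distance s from y'. Then d(e,b) ≤ s√2. -/
open Metric Set

/-- In a CAT(0) space, if `d(x,y) ≤ d(x,y')` and `e`, `b` are the points at distance `s`
from `y'` on the geodesics `[y',x]` and `[y',y]` respectively, then `d(e,b) ≤ s·√2`. -/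
theorem cat0_right_angle_bound
    {X : Type*} [MetricSpace X] (hX : IsCAT0Space X) (x y y' : X)
    (hxy : dist x y ≤ dist x y')
    (s : ℝ) (hs0 : 0 ≤ s) (hs1 : s ≤ dist y' x) (hs2 : s ≤ dist y' y)
    (γ₁ γ₂ : ℝ → X) (h₁ : IsGeodesicFrom γ₁ y' x) (h₂ : IsGeodesicFrom γ₂ y' y) :
    dist (γ₁ s) (γ₂ s) ≤ s * Real.sqrt 2 := by
  rcases eq_or_lt_of_le hs0 with rfl | hspos
  · have h0 : γ₁ 0 = γ₂ 0 := by rw [h₁.1, h₂.1]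
    simp [h0]
  have hD : 0 < dist y' x := lt_of_lt_of_le hspos hs1
  have hd : 0 < dist y' y := lt_of_lt_of_le hspos hs2
  have he0 : dist (γ₁ s) y' = s := by
    have h := h₁.2.2 s ⟨hs0, hs1⟩ 0 ⟨le_refl _, dist_nonneg⟩
    rw [h₁.1] at h
    rw [h, abs_of_nonneg (by linarith : (0:ℝ) ≤ s - 0)]; ring
  have I1 := hX.2 y' x γ₁ h₁ y s ⟨hs0, hs1⟩
  have I2 := hX.2 y' y γ₂ h₂ (γ₁ s) s ⟨hs0, hs2⟩
  rw [he0] at I2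
  rw [dist_comm y y'] at I1
  have hdyx : dist y x ≤ dist y' x := by
    rw [dist_comm y x, dist_comm y' x]; exact hxy
  have h1 : s * dist y x ^ 2 ≤ s * dist y' x ^ 2 := by
    have := mul_le_mul hdyx hdyx dist_nonneg dist_nonneg
    nlinarith
  have hA2 : dist y (γ₁ s) ^ 2 * dist y' x ≤
      (dist y' x - s) * dist y' y ^ 2 + s ^ 2 * dist y' x := by nlinarith [I1, h1]
  rw [dist_comm (γ₁ s) y] at I2
  have t1 := mul_le_mul_of_nonneg_right I2 (le_of_lt hD)
  have t2 := mul_le_mul_of_nonneg_left hA2 hs0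
  have hmul : dist (γ₁ s) (γ₂ s) ^ 2 * (dist y' y * dist y' x) ≤
      2 * s ^ 2 * (dist y' y * dist y' x) := by
    nlinarith [t1, t2, sq_nonneg (s * dist y' y)]
  have hdD : 0 < dist y' y * dist y' x := mul_pos hd hD
  have key : dist (γ₁ s) (γ₂ s) ^ 2 ≤ 2 * s ^ 2 := le_of_mul_le_mul_right
    (by linarith [hmul]) hdD
  nlinarith [Real.sq_sqrt (by norm_num : (0:ℝ) ≤ 2), Real.sqrt_nonneg 2,
    dist_nonneg (x := γ₁ s) (y := γ₂ s), mul_nonneg hs0 (Real.sqrt_nonneg 2),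
    sq_nonneg (dist (γ₁ s) (γ₂ s) - s * Real.sqrt 2)]
end
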